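/- Let Z be a discrete real random variable with CDF F_Z and probability mass function p_Z, and let U ~ Uniform[0,1] be independent of Z. Then S := F_Z(Z⁻) + U · p_Z(Z), where F_Z(z⁻) denotes the left limit of F_Z at z, is uniformly distributed on [0,1]. -/

import Mathlib

/-!
The atom of `Z` at `z` has mass `p(z)`, and `S` spreads it uniformly over the interval
`(F_Z(z⁻), F_Z(z)]` of the same length. These intervals are pairwise disjoint, lie in `[0, 1]`
and, because `Z` is discrete, their lengths add up to `1`; so their union is `[0, 1]` up to a
null set, and `P(S ≤ u)` is the Lebesgue measure of `[0, u]`.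
-/

open MeasureTheory ProbabilityTheory Set Function

lemma measure_setOf_eq_tsum_range {Ω β : Type*} [MeasurableSpace Ω] [MeasurableSpace β]
    [MeasurableSingletonClass β] (μ : Measure Ω) {Z : Ω → β} (hZ : Measurable Z)
    (hcount : (range Z).Countable) (P : β → Ω → Prop)
    (hP : ∀ z, MeasurableSet {ω | P z ω}) :
    μ {ω | P (Z ω) ω} = ∑' z : range Z, μ (Z ⁻¹' {(z : β)} ∩ {ω | P z ω}) := by
  have hfibers : {ω | P (Z ω) ω} = ⋃ z ∈ range Z, Z ⁻¹' {z} ∩ {ω | P z ω} := by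
    ext ω
    refine ⟨fun h => mem_biUnion (mem_range_self ω) ⟨rfl, h⟩, ?_⟩
    simp only [mem_iUnion₂, mem_inter_iff, mem_preimage, mem_singleton_iff]
    rintro ⟨_, _, rfl, h⟩
    exact h
  rw [hfibers, measure_biUnion hcount
      (PairwiseDisjoint.mono ((pairwise_disjoint_fiber Z).set_pairwise _)
        fun _ => inter_subset_left)
      fun z _ => (hZ (measurableSet_singleton z)).inter (hP z)]

section UniformCDF

variable {Ω : Type*} [MeasurableSpace Ω] {μ : Measure Ω} [IsProbabilityMeasure μ]
  {U : Ω → ℝ}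

lemma measure_le_eq_ofReal_min_one
    (hU : ∀ u ∈ Icc (0:ℝ) 1, μ {ω | U ω ≤ u} = ENNReal.ofReal u) (t : ℝ) :
    μ {ω | U ω ≤ t} = ENNReal.ofReal (min t 1) := by
  rcases le_total t 0 with ht | ht
  · have hnull : μ {ω | U ω ≤ t} ≤ 0 :=
      calc μ {ω | U ω ≤ t} ≤ μ {ω | U ω ≤ 0} := measure_mono fun _ hω => hω.trans ht
        _ = 0 := by simpa using hU 0 (by simp)
    rw [nonpos_iff_eq_zero.1 hnull, ENNReal.ofReal_eq_zero.2 (min_le_of_left_le ht)]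
  rcases le_total t 1 with ht1 | ht1
  · rw [min_eq_left ht1, hU t ⟨ht, ht1⟩]
  · rw [min_eq_right ht1, ENNReal.ofReal_one]
    refine le_antisymm prob_le_one ?_
    calc (1 : ENNReal) = μ {ω | U ω ≤ 1} := by simpa using (hU 1 (by simp)).symm
      _ ≤ μ {ω | U ω ≤ t} := measure_mono fun _ hω => hω.trans ht1

lemma ofReal_mul_measure_add_mul_le
    (hU : ∀ u ∈ Icc (0:ℝ) 1, μ {ω | U ω ≤ u} = ENNReal.ofReal u) {c : ℝ} (hc : 0 ≤ c)
    (a u : ℝ) :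
    ENNReal.ofReal c * μ {ω | a + U ω * c ≤ u} = volume (Ioc a (a + c) ∩ Iic u) := by
  rw [Ioc_inter_Iic, Real.volume_Ioc]
  rcases hc.eq_or_lt with rfl | hc
  · simp
  have hevent : {ω | a + U ω * c ≤ u} = {ω | U ω ≤ (u - a) / c} := by
    ext ω
    simp only [mem_ofPred_eq, le_div_iff₀ hc]
    constructor <;> intro h <;> linarith
  rw [hevent, measure_le_eq_ofReal_min_one hU, ← ENNReal.ofReal_mul hc.le,
    mul_min_of_nonneg _ _ hc.le, mul_div_cancel₀ _ hc.ne', mul_one, ← min_sub_sub_right,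
    add_sub_cancel_left, min_comm]

end UniformCDF

lemma volume_inter_Iic_of_subset_Icc {A : Set ℝ} (hA : NullMeasurableSet A)
    (hsub : A ⊆ Icc 0 1) (hvol : volume A = 1) {u : ℝ} (hu : u ∈ Icc (0:ℝ) 1) :
    volume (A ∩ Iic u) = ENNReal.ofReal u := by
  have hae : A =ᵐ[volume] Icc 0 1 :=
    ae_eq_of_subset_of_measure_ge hsub (by simp [hvol]) hA (by simp)
  rw [measure_congr (hae.inter (Filter.EventuallyEq.refl _ (Iic u))), ← Ici_inter_Iic,
    inter_assoc, Iic_inter_Iic, inf_of_le_right hu.2, Ici_inter_Iic, Real.volume_Icc, sub_zero]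

section AtomInterval

variable {Ω : Type*} [MeasurableSpace Ω] (μ : Measure Ω) (Z : Ω → ℝ)

def atomInterval (z : ℝ) : Set ℝ := Ioc (μ.real {ω | Z ω < z}) (μ.real {ω | Z ω ≤ z})

variable {μ Z}

lemma measureReal_lt_add_measureReal_eq_measureReal_le [IsFiniteMeasure μ] (hZ : Measurable Z)
    (z : ℝ) :
    μ.real {ω | Z ω < z} + μ.real {ω | Z ω = z} = μ.real {ω | Z ω ≤ z} := by
  have hatom : MeasurableSet {ω | Z ω = z} := hZ (measurableSet_singleton z)
  rw [← measureReal_union _ hatom]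
  · simp only [← ofPred_or, le_iff_lt_or_eq]
  · exact disjoint_left.2 fun ω h₁ h₂ => (ne_of_lt h₁) h₂

lemma atomInterval_eq [IsFiniteMeasure μ] (hZ : Measurable Z) (z : ℝ) :
    atomInterval μ Z z =
      Ioc (μ.real {ω | Z ω < z}) (μ.real {ω | Z ω < z} + μ.real {ω | Z ω = z}) := by
  rw [measureReal_lt_add_measureReal_eq_measureReal_le hZ, atomInterval]

lemma volume_atomInterval [IsFiniteMeasure μ] (hZ : Measurable Z) (z : ℝ) :
    volume (atomInterval μ Z z) = μ (Z ⁻¹' {z}) := by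
  rw [atomInterval_eq hZ, Real.volume_Ioc, add_sub_cancel_left, ofReal_measureReal]
  rfl

lemma pairwise_disjoint_atomInterval [IsFiniteMeasure μ] :
    Pairwise (Disjoint on atomInterval μ Z) := by
  refine (pairwise_disjoint_on _).2 fun z z' hz => Ioc_disjoint_Ioc_of_le ?_
  exact measureReal_mono fun ω (hω : Z ω ≤ z) => show Z ω < z' from hω.trans_lt hz

lemma atomInterval_subset_Icc [IsProbabilityMeasure μ] (z : ℝ) :
    atomInterval μ Z z ⊆ Icc 0 1 :=
  Ioc_subset_Icc_self.trans (Icc_subset_Icc measureReal_nonneg measureReal_le_one)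

lemma volume_biUnion_atomInterval [IsProbabilityMeasure μ] (hZ : Measurable Z)
    (hdiscrete : (range Z).Countable) :
    volume (⋃ z ∈ range Z, atomInterval μ Z z) = 1 := by
  rw [measure_biUnion hdiscrete (pairwise_disjoint_atomInterval.set_pairwise _)
      fun _ _ => measurableSet_Ioc, tsum_congr fun z : range Z => volume_atomInterval hZ z,
    ← measure_biUnion hdiscrete ((pairwise_disjoint_fiber Z).set_pairwise _)
      fun z _ => hZ (measurableSet_singleton z),
    biUnion_preimage_singleton, preimage_range, measure_univ]

end AtomInterval

lemma measure_preimage_inter_add_mul_le {Ω : Type*} [MeasurableSpace Ω] {μ : Measure Ω}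
    [IsProbabilityMeasure μ] {Z U : Ω → ℝ} (hZ : Measurable Z) (hindep : IndepFun Z U μ)
    (hUuniform : ∀ u ∈ Icc (0:ℝ) 1, μ {ω | U ω ≤ u} = ENNReal.ofReal u) (z u : ℝ) :
    μ (Z ⁻¹' {z} ∩ {ω | μ.real {ω | Z ω < z} + U ω * μ.real {ω | Z ω = z} ≤ u}) =
      volume (atomInterval μ Z z ∩ Iic u) := by
  set a := μ.real {ω | Z ω < z}
  set c := μ.real {ω | Z ω = z}
  have hmeas : MeasurableSet {v : ℝ | a + v * c ≤ u} :=
    measurableSet_le (by fun_prop) (by fun_prop)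
  change μ (Z ⁻¹' {z} ∩ U ⁻¹' {v | a + v * c ≤ u}) = _
  rw [hindep.measure_inter_preimage_eq_mul _ _ (measurableSet_singleton z) hmeas,
    ← ofReal_measureReal, atomInterval_eq hZ]
  exact ofReal_mul_measure_add_mul_le hUuniform measureReal_nonneg a u

/-- Randomized probability integral transform for a discrete random variable:
`S = F_Z(Z⁻) + U·p_Z(Z)` is uniform on `[0,1]` when `U ~ Uniform[0,1]` is
independent of `Z`. -/
theorem randomized_probability_integral_transform
    {Ω : Type*} [MeasurableSpace Ω] (μ : Measure Ω) [IsProbabilityMeasure μ]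
    (Z U : Ω → ℝ) (hZ : Measurable Z) (hU : Measurable U)
    (hdiscrete : (Set.range Z).Countable)
    (hindep : IndepFun Z U μ)
    (hUuniform : ∀ u ∈ Set.Icc (0:ℝ) 1, μ {ω | U ω ≤ u} = ENNReal.ofReal u)
    (Fm p : ℝ → ℝ)
    (hFm : ∀ z, Fm z = (μ {ω | Z ω < z}).toReal)
    (hp : ∀ z, p z = (μ {ω | Z ω = z}).toReal) :
    ∀ u ∈ Set.Icc (0:ℝ) 1,
      μ {ω | Fm (Z ω) + U ω * p (Z ω) ≤ u} = ENNReal.ofReal u := by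
  intro u hu
  obtain rfl : Fm = fun z => μ.real {ω | Z ω < z} := funext hFm
  obtain rfl : p = fun z => μ.real {ω | Z ω = z} := funext hp
  refine (measure_setOf_eq_tsum_range μ hZ hdiscrete
    (fun z ω => μ.real {ω | Z ω < z} + U ω * μ.real {ω | Z ω = z} ≤ u)
    fun _ => measurableSet_le (by fun_prop) measurable_const).trans ?_
  rw [tsum_congr fun z : range Z =>
      measure_preimage_inter_add_mul_le hZ hindep hUuniform z u,
    ← measure_biUnion hdiscrete
      (PairwiseDisjoint.mono (pairwise_disjoint_atomInterval.set_pairwise _)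
        fun _ => inter_subset_left)
      fun _ _ => measurableSet_Ioc.inter measurableSet_Iic,
    ← iUnion₂_inter]
  exact volume_inter_Iic_of_subset_Icc
    (MeasurableSet.biUnion hdiscrete fun _ _ => measurableSet_Ioc).nullMeasurableSet
    (iUnion₂_subset fun z _ => atomInterval_subset_Icc z)
    (volume_biUnion_atomInterval hZ hdiscrete) hu
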